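/- Let f : ℝ → ℝ be an integrable even function supported in [-1,1] such that f̂(n) ≥ 0 for every nonzero integer n. Then sup_{n∈ℤ} f̂(n + 1/2)·(n + 1/2)² ≥ (2/π²)·∫_{-1}^{1} f(x)·(1 - 3x²) dx. -/

import Mathlib

open MeasureTheory Real

/-- The (real-valued) Fourier transform of an integrable even real function:
`f̂(ξ) = ∫ f(x) cos(2πξx) dx`. -/
noncomputable def realFourier (f : ℝ → ℝ) (ξ : ℝ) : ℝ :=
  ∫ x : ℝ, f x * Real.cos (2 * Real.pi * ξ * x)

/-!
For `|x| ≤ 1` one has `∑_{n ∈ ℤ} cos (2π(n + ½)x) / (n + ½)² = π² (1 - 2|x|)` and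
`∑_{m ≥ 1} cos (2πmx) / m² = π² (x² - |x| + 1/6)`. Integrating against `f` (dominated
convergence) gives `∑ f̂(n + ½) / (n + ½)² = π² ∫ f (1 - 2|x|)` and
`∑ f̂(m) / m² = π² ∫ f (x² - |x| + 1/6)`, the latter nonnegative by hypothesis. Since
`1 - 3x² = 3/2 (1 - 2|x|) - 3 (x² - |x| + 1/6)`, the left-hand side is at most
`3/π⁴ ∑ f̂(n + ½) / (n + ½)²`, a weighted average of the values `f̂(n + ½) (n + ½)²` with weights
`3 / (π⁴ (n + ½)⁴)`, which sum to `1` because `∑ (n + ½)⁻⁴ = π⁴ / 3`.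
-/

open Set

theorem HasSum.odd_of_even {G : Type*} [AddCommGroup G] [UniformSpace G] [IsUniformAddGroup G]
    [CompleteSpace G] [T2Space G] {f : ℕ → G} {a b : G} (hf : HasSum f a)
    (he : HasSum (fun k ↦ f (2 * k)) b) : HasSum (fun k ↦ f (2 * k + 1)) (a - b) := by
  have ho : Summable (fun k ↦ f (2 * k + 1)) :=
    hf.summable.comp_injective ((add_left_injective 1).comp (mul_right_injective₀ two_ne_zero))
  rw [hf.unique (he.even_add_odd ho.hasSum), add_sub_cancel_left]
  exact ho.hasSum

theorem hasSum_int_add_half {φ : ℝ → ℝ} (heven : ∀ t, φ (-t) = φ t) {a b : ℝ}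
    (hhalf : HasSum (fun k : ℕ ↦ φ (k / 2)) a) (hnat : HasSum (fun k : ℕ ↦ φ k) b) :
    HasSum (fun n : ℤ ↦ φ (n + 1 / 2)) (2 * (a - b)) := by
  have hodd : HasSum (fun n : ℕ ↦ φ (n + 1 / 2)) (a - b) :=
    (hhalf.odd_of_even (b := b) (by simpa using hnat)).congr_fun fun n ↦ by push_cast; ring_nf
  rw [two_mul]
  refine hodd.of_nat_of_neg_add_one (hodd.congr_fun fun n ↦ ?_)
  rw [← heven]
  push_cast
  ring_nf

theorem hasSum_cos_div_sq {x : ℝ} (hx : x ∈ Icc (-1 : ℝ) 1) :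
    HasSum (fun n : ℕ ↦ cos (2 * π * n * x) / n ^ 2) (π ^ 2 * (x ^ 2 - |x| + 1 / 6)) := by
  have habs : |x| ∈ Icc (0 : ℝ) 1 := ⟨abs_nonneg x, abs_le.mpr hx⟩
  convert hasSum_one_div_nat_pow_mul_cos one_ne_zero habs using 1
  · ext n
    rw [← cos_abs (2 * π * n * x), abs_mul, abs_of_nonneg (by positivity)]
    ring
  · rw [← bernoulliFun, show 2 * 1 = 2 from rfl, bernoulliFun_two, sq_abs]
    push_cast [Nat.factorial]
    ring

theorem hasSum_cos_div_sq_nat_succ {x : ℝ} (hx : x ∈ Icc (-1 : ℝ) 1) :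
    HasSum (fun n : ℕ ↦ cos (2 * π * (n + 1) * x) / ((n : ℝ) + 1) ^ 2)
      (π ^ 2 * (x ^ 2 - |x| + 1 / 6)) := by
  have h := (hasSum_nat_add_iff' 1 (f := fun n : ℕ ↦ cos (2 * π * n * x) / (n : ℝ) ^ 2)).mpr
    (by simpa using hasSum_cos_div_sq hx)
  simpa using h

theorem hasSum_cos_div_sq_int_add_half {x : ℝ} (hx : x ∈ Icc (-1 : ℝ) 1) :
    HasSum (fun n : ℤ ↦ cos (2 * π * (n + 1 / 2) * x) / (n + 1 / 2) ^ 2)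
      (π ^ 2 * (1 - 2 * |x|)) := by
  have hhalf : HasSum (fun k : ℕ ↦ cos (2 * π * (k / 2) * x) / (k / 2) ^ 2)
      (4 * (π ^ 2 * ((x / 2) ^ 2 - |x / 2| + 1 / 6))) :=
    ((hasSum_cos_div_sq (x := x / 2) ⟨by linarith [hx.1], by linarith [hx.2]⟩).mul_left 4).congr_fun
      fun k ↦ by rw [show 2 * π * (k / 2) * x = 2 * π * k * (x / 2) by ring]; ring
  have h := hasSum_int_add_half (φ := fun t ↦ cos (2 * π * t * x) / t ^ 2)
    (fun t ↦ by simp only [mul_neg, neg_mul, cos_neg, neg_sq]) hhalf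
    (hasSum_cos_div_sq hx)
  rwa [abs_div, abs_two, show 2 * (4 * (π ^ 2 * ((x / 2) ^ 2 - |x| / 2 + 1 / 6)) -
    π ^ 2 * (x ^ 2 - |x| + 1 / 6)) = π ^ 2 * (1 - 2 * |x|) by ring] at h

theorem hasSum_one_div_int_add_half_pow_four :
    HasSum (fun n : ℤ ↦ 1 / ((n : ℝ) + 1 / 2) ^ 4) (π ^ 4 / 3) := by
  have hhalf : HasSum (fun k : ℕ ↦ 1 / ((k : ℝ) / 2) ^ 4) (16 * (π ^ 4 / 90)) :=
    (hasSum_zeta_four.mul_left 16).congr_fun fun k ↦ by ring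
  have h := hasSum_int_add_half (φ := fun t ↦ 1 / t ^ 4) (fun t ↦ by ring) hhalf hasSum_zeta_four
  rwa [show 2 * (16 * (π ^ 4 / 90) - π ^ 4 / 90) = π ^ 4 / 3 by ring] at h

theorem integral_eq_intervalIntegral_of_forall_notMem_Icc {E : Type*} [NormedAddCommGroup E]
    [NormedSpace ℝ E] {f : ℝ → E} {a b : ℝ} (hab : a ≤ b) (hf : ∀ x ∉ Icc a b, f x = 0) :
    ∫ x, f x = ∫ x in a..b, f x := by
  rw [intervalIntegral.integral_of_le hab, ← integral_Icc_eq_integral_Ioc]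
  exact (setIntegral_eq_integral_of_forall_compl_eq_zero hf).symm

theorem hasSum_realFourier_div_sq {ι : Type*} [Countable ι] {f : ℝ → ℝ} (hf : Integrable f)
    (hsupp : ∀ x, x ∉ Icc (-1 : ℝ) 1 → f x = 0) {ξ : ι → ℝ} {K : ℝ → ℝ}
    (hK : ∀ x ∈ Icc (-1 : ℝ) 1, HasSum (fun i ↦ cos (2 * π * ξ i * x) / ξ i ^ 2) (K x)) :
    HasSum (fun i ↦ realFourier f (ξ i) / ξ i ^ 2) (∫ x in (-1)..1, f x * K x) := by
  have hξ : Summable fun i ↦ 1 / ξ i ^ 2 := by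
    simpa using (hK 0 (by norm_num)).summable
  have hfourier (i : ι) : realFourier f (ξ i) / ξ i ^ 2 =
      ∫ x in (-1)..1, f x * (cos (2 * π * ξ i * x) / ξ i ^ 2) := by
    rw [realFourier, integral_eq_intervalIntegral_of_forall_notMem_Icc (by norm_num : (-1 : ℝ) ≤ 1)
      fun x hx ↦ by rw [hsupp x hx, zero_mul], ← intervalIntegral.integral_div]
    simp only [mul_div_assoc]
  simp only [hfourier]
  refine intervalIntegral.hasSum_integral_of_dominated_convergence
    (fun i x ↦ 1 / ξ i ^ 2 * ‖f x‖) (fun i ↦ ?_) (fun i ↦ ?_) ?_ ?_ ?_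
  · exact hf.aestronglyMeasurable.restrict.mul (by fun_prop)
  · refine .of_forall fun x _ ↦ ?_
    rw [norm_mul, mul_comm, norm_div, norm_pow, Real.norm_eq_abs, Real.norm_eq_abs, sq_abs]
    gcongr
    exact abs_cos_le_one _
  · exact .of_forall fun x _ ↦ hξ.mul_right _
  · simp only [tsum_mul_right]
    exact (hf.norm.const_mul _).intervalIntegrable
  · refine .of_forall fun x hx ↦ (hK x ?_).mul_left (f x)
    rw [uIoc_of_le (by norm_num)] at hx
    exact Ioc_subset_Icc_self hx

theorem EReal.coe_le_iSup_of_hasSum_mul {ι : Type*} {w X : ι → ℝ} {a : ℝ} (hw₀ : ∀ i, 0 ≤ w i)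
    (hw : HasSum w 1) (ha : HasSum (fun i ↦ w i * X i) a) : (a : EReal) ≤ ⨆ i, (X i : EReal) := by
  by_contra! hlt
  obtain ⟨b, hXb, hba⟩ := EReal.lt_iff_exists_real_btwn.mp hlt
  have hX (i : ι) : X i ≤ b := EReal.coe_le_coe_iff.mp ((le_iSup _ i).trans hXb.le)
  have hab : a ≤ b := by
    simpa using hasSum_le (fun i ↦ mul_le_mul_of_nonneg_left (hX i) (hw₀ i)) ha (hw.mul_right b)
  exact (EReal.coe_lt_coe_iff.mp hba).not_ge hab

theorem intervalIntegral_mul_one_sub_three_sq_eq {f : ℝ → ℝ} {a b : ℝ}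
    (hf : IntervalIntegrable f volume a b) :
    2 / π ^ 2 * ∫ x in a..b, f x * (1 - 3 * x ^ 2) =
      3 / π ^ 4 * (∫ x in a..b, f x * (π ^ 2 * (1 - 2 * |x|))) -
      6 / π ^ 4 * ∫ x in a..b, f x * (π ^ 2 * (x ^ 2 - |x| + 1 / 6)) := by
  rw [← intervalIntegral.integral_const_mul, ← intervalIntegral.integral_const_mul,
    ← intervalIntegral.integral_const_mul, ← intervalIntegral.integral_sub
      ((hf.mul_continuousOn (by fun_prop)).const_mul _)
      ((hf.mul_continuousOn (by fun_prop)).const_mul _)]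
  congr 1 with x
  field_simp
  ring

theorem int_add_half_ne_zero (n : ℤ) : (n : ℝ) + 1 / 2 ≠ 0 := by
  intro h
  have : 2 * n + 1 = 0 := by exact_mod_cast (by linarith : 2 * (n : ℝ) + 1 = 0)
  omega

theorem triangle_half_integer_inequality_general
    (f : ℝ → ℝ) (hf : Integrable f)
    (hsupp : ∀ x : ℝ, x ∉ Set.Icc (-1 : ℝ) 1 → f x = 0)
    (hpos : ∀ n : ℤ, n ≠ 0 → 0 ≤ realFourier f n) :
    (((2 / Real.pi ^ 2) * ∫ x in (-1 : ℝ)..1, f x * (1 - 3 * x ^ 2) : ℝ) : EReal) ≤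
      ⨆ n : ℤ, ((realFourier f ((n : ℝ) + 1 / 2) * ((n : ℝ) + 1 / 2) ^ 2 : ℝ) : EReal) := by
  have hhalf := hasSum_realFourier_div_sq hf hsupp fun x hx ↦ hasSum_cos_div_sq_int_add_half hx
  have hnat := hasSum_realFourier_div_sq hf hsupp fun x hx ↦ hasSum_cos_div_sq_nat_succ hx
  have hnat_nonneg := hnat.nonneg fun m ↦
    div_nonneg (by exact_mod_cast hpos (m + 1) (by omega)) (sq_nonneg _)
  have hsplit := intervalIntegral_mul_one_sub_three_sq_eq (hf.intervalIntegrable (a := -1) (b := 1))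
  have hweights : HasSum (fun n : ℤ ↦ 3 / π ^ 4 * (1 / ((n : ℝ) + 1 / 2) ^ 4)) 1 := by
    have h := hasSum_one_div_int_add_half_pow_four.mul_left (3 / π ^ 4)
    rwa [show 3 / π ^ 4 * (π ^ 4 / 3) = 1 by field_simp] at h
  refine (EReal.coe_le_coe_iff.mpr ?_).trans (EReal.coe_le_iSup_of_hasSum_mul
    (fun n ↦ by positivity) hweights ((hhalf.mul_left (3 / π ^ 4)).congr_fun fun n ↦ ?_))
  · rw [hsplit]
    linarith [mul_nonneg (by positivity : (0 : ℝ) ≤ 6 / π ^ 4) hnat_nonneg]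
  · field_simp [int_add_half_ne_zero n]

theorem triangle_half_integer_inequality
    (f : ℝ → ℝ) (hf : Integrable f)
    (heven : ∀ x : ℝ, f (-x) = f x)
    (hsupp : ∀ x : ℝ, x ∉ Set.Icc (-1 : ℝ) 1 → f x = 0)
    (hpos : ∀ n : ℤ, n ≠ 0 → 0 ≤ realFourier f n) :
    (((2 / Real.pi ^ 2) * ∫ x in (-1 : ℝ)..1, f x * (1 - 3 * x ^ 2) : ℝ) : EReal) ≤
      ⨆ n : ℤ, ((realFourier f ((n : ℝ) + 1 / 2) * ((n : ℝ) + 1 / 2) ^ 2 : ℝ) : EReal) :=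
  triangle_half_integer_inequality_general f hf hsupp hpos
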